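/- For n ≥ 2, the number of permutations of {1,...,n} that can be written in one-line notation as A n B, where A is a nonempty sequence, B is a (possibly empty) sequence, and every entry of A is larger than every entry of B, equals ∑_{i=0}^{n-2} i!·(n-1-i)!. -/

import Mathlib

/-!
Let `p` be the position of the maximum `n` of `π ∈ S_{n+1}` (values and positions `0, …, n`).
If every entry before `n` exceeds every entry after it, counting shows that the `n - p` entries
after the maximum are exactly the values `0, …, n - p - 1` and the `p` entries before it are
`n - p, …, n - 1`. So the cyclic shift of values `y ↦ y - (n - p)` (mod `n + 1`) turns `π` into a
permutation preserving the position blocks `[0, p)`, `{p}`, `(p, n]`, and conversely. There are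
`p! · 1! · (n - p)!` of these; summing over `p ≥ 1` gives the formula.
-/

open Finset Equiv Nat

section
variable {n : ℕ}

/-- `π = A n B` in one-line notation with `min A > max B`; `A` may be empty. -/
def IsSplitAtMax (π : Perm (Fin (n + 1))) : Prop :=
  ∀ i ℓ, i < π.symm (Fin.last n) → π.symm (Fin.last n) < ℓ → π ℓ < π i

instance : DecidablePred (IsSplitAtMax (n := n)) :=
  fun π => by unfold IsSplitAtMax; infer_instance

theorem Fin.val_sub_rev (y p : Fin (n + 1)) :
    ((y - p.rev : Fin (n + 1)) : ℕ) = if n - p ≤ y then y - (n - p) else y + p + 1 := by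
  have := p.isLt
  split_ifs with h
  · rw [Fin.coe_sub_iff_le.2 (by rw [Fin.le_def, Fin.val_rev]; omega), Fin.val_rev]; omega
  · rw [Fin.coe_sub_iff_lt.2 (by rw [Fin.lt_def, Fin.val_rev]; omega), Fin.val_rev]; omega

theorem prod_factorial_card_compare_fiber (p : Fin (n + 1)) :
    ∏ o, (Fintype.card {x // compare x p = o})! = p ! * (n - p)! := by
  have hlt : Fintype.card {x // compare x p = .lt} = p := by
    simp only [compare_lt_iff_lt, Fintype.card_subtype, filter_gt_eq_Iio, Fin.card_Iio]
  have hgt : Fintype.card {x // compare x p = .gt} = n - p := by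
    simp only [compare_gt_iff_gt, Fintype.card_subtype, filter_lt_eq_Ioi, Fin.card_Ioi,
      Nat.add_sub_cancel]
  change ∏ o ∈ ({.lt, .eq, .gt} : Finset Ordering), _ = _
  simp [hlt, hgt]

variable {π : Perm (Fin (n + 1))}

theorem IsSplitAtMax.sub_le_apply (h : IsSplitAtMax π) {i : Fin (n + 1)}
    (hi : i < π.symm (Fin.last n)) : n - π.symm (Fin.last n) ≤ π i := by
  have := card_le_card_of_injOn π (s := Ioi (π.symm (Fin.last n))) (t := Iio (π i))
    (fun ℓ hℓ => mem_Iio.2 (h i ℓ hi (mem_Ioi.1 hℓ))) π.injective.injOn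
  simpa [Fin.card_Ioi, Fin.card_Iio] using this

theorem IsSplitAtMax.apply_lt_sub (h : IsSplitAtMax π) {ℓ : Fin (n + 1)}
    (hℓ : π.symm (Fin.last n) < ℓ) : (π ℓ : ℕ) < n - π.symm (Fin.last n) := by
  have hmax : π ℓ < Fin.last n := lt_of_le_of_ne (Fin.le_last _) fun e => by
    rw [← e, symm_apply_apply] at hℓ; exact lt_irrefl _ hℓ
  have := card_le_card_of_injOn π (s := Iic (π.symm (Fin.last n))) (t := Ioi (π ℓ))
    (fun i hi => by
      rcases (mem_Iic.1 hi).lt_or_eq with hi | rfl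
      · exact mem_Ioi.2 (h i ℓ hi hℓ)
      · simpa using hmax) π.injective.injOn
  simp only [Fin.card_Iic, Fin.card_Ioi, add_tsub_cancel_right, Order.add_one_le_iff] at this
  omega

theorem IsSplitAtMax.compare_apply_sub_rev (h : IsSplitAtMax π) (x : Fin (n + 1)) :
    compare (π x - (π.symm (Fin.last n)).rev) (π.symm (Fin.last n)) =
      compare x (π.symm (Fin.last n)) := by
  have hp := (π.symm (Fin.last n)).isLt
  rcases lt_trichotomy x (π.symm (Fin.last n)) with hx | rfl | hx
  · have hlow := h.sub_le_apply hx
    have hlast : π x ≠ Fin.last n := fun e => hx.ne (π.symm_apply_eq.2 e.symm).symm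
    have := Fin.val_lt_last hlast
    rw [compare_lt_iff_lt.2 hx, compare_lt_iff_lt, Fin.lt_def, Fin.val_sub_rev, if_pos hlow]
    omega
  · rw [Std.compare_self, compare_eq_iff_eq, apply_symm_apply, Fin.ext_iff, Fin.val_sub_rev]
    simp only [Fin.val_last, if_pos (Nat.sub_le n _)]
    omega
  · have hup := h.apply_lt_sub hx
    rw [compare_gt_iff_gt.2 hx, compare_gt_iff_gt, Fin.lt_def, Fin.val_sub_rev, if_neg (by omega)]
    omega

theorem isSplitAtMax_and_symm_last_eq_iff (p : Fin (n + 1)) :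
    IsSplitAtMax π ∧ π.symm (Fin.last n) = p ↔ ∀ x, compare (π x - p.rev) p = compare x p := by
  refine ⟨fun ⟨h, hp⟩ => hp ▸ h.compare_apply_sub_rev, fun H => ?_⟩
  have hp := p.isLt
  have hmax : π p = Fin.last n := by
    have := H p
    rw [Std.compare_self, compare_eq_iff_eq, Fin.ext_iff, Fin.val_sub_rev] at this
    ext
    split_ifs at this <;> simp only [Fin.val_last] <;> omega
  have hpos : π.symm (Fin.last n) = p := π.symm_apply_eq.2 hmax.symm
  refine ⟨fun i ℓ hi hℓ => ?_, hpos⟩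
  rw [hpos] at hi hℓ
  have hA := H i
  have hB := H ℓ
  rw [compare_lt_iff_lt.2 hi, compare_lt_iff_lt, Fin.lt_def, Fin.val_sub_rev] at hA
  rw [compare_gt_iff_gt.2 hℓ, compare_gt_iff_gt, Fin.lt_def, Fin.val_sub_rev] at hB
  rw [Fin.lt_def]
  split_ifs at hA hB <;> omega

theorem card_isSplitAtMax_and_symm_last_eq (p : Fin (n + 1)) :
    Fintype.card {π : Perm (Fin (n + 1)) // IsSplitAtMax π ∧ π.symm (Fin.last n) = p} =
      p ! * (n - p)! := by
  calc _ = Fintype.card {τ : Perm (Fin (n + 1)) // (compare · p) ∘ τ = (compare · p)} :=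
        Fintype.card_congr <| subtypeEquiv (Equiv.mulLeft (Equiv.subRight p.rev)) fun π => by
          rw [isSplitAtMax_and_symm_last_eq_iff, funext_iff]; rfl
    _ = ∏ o, (Fintype.card {x // compare x p = o})! := DomMulAct.stabilizer_card _
    _ = p ! * (n - p)! := prod_factorial_card_compare_fiber p

end

/-- For `n ≥ 2`, the number of permutations of `{1,…,n}` of the form `A n B`
with `A` nonempty (the maximum `n` not in the first position) and every entry of
`A` larger than every entry of `B`, equals `∑_{i=0}^{n-2} i!·(n-1-i)!`.
Here `π.symm ⟨n-1,_⟩` is the position of the maximum value. -/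
theorem class31_containment_count (n : ℕ) (hn : 2 ≤ n) :
    (Finset.univ.filter fun π : Equiv.Perm (Fin n) =>
        (⟨0, by omega⟩ : Fin n) < π.symm ⟨n - 1, by omega⟩ ∧
          ∀ i ℓ : Fin n, i < π.symm ⟨n - 1, by omega⟩ →
            π.symm ⟨n - 1, by omega⟩ < ℓ → π ℓ < π i).card =
      ∑ i ∈ Finset.range (n - 1), i.factorial * (n - 1 - i).factorial := by
  obtain ⟨m, rfl⟩ : ∃ m, n = m + 1 := ⟨n - 1, by omega⟩
  have hlast (h : m < m + 1) : (⟨m, h⟩ : Fin (m + 1)) = Fin.last m := rfl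
  simp only [Nat.add_sub_cancel, Fin.mk_zero', hlast]
  -- `q` is the length of `B`
  rw [card_eq_sum_card_fiberwise (f := fun π : Perm (Fin (m + 1)) => m - π.symm (Fin.last m))
    (t := range m) fun π hπ => by
      have := Fin.val_ne_zero_iff.2 (Fin.pos_iff_ne_zero.1 (mem_filter.1 (mem_coe.1 hπ)).2.1)
      exact mem_coe.2 (mem_range.2 (Nat.sub_lt (by omega) (Nat.pos_of_ne_zero this)))]
  refine sum_congr rfl fun q hq => ?_
  have hq := mem_range.1 hq
  rw [filter_filter, ← Fintype.card_subtype]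
  calc _ = Fintype.card {π : Perm (Fin (m + 1)) //
          IsSplitAtMax π ∧ π.symm (Fin.last m) = ⟨m - q, by omega⟩} :=
        Fintype.card_congr <| subtypeEquivRight fun π => by
          simp only [IsSplitAtMax, Fin.ext_iff, Fin.pos_iff_ne_zero, ← Fin.val_ne_zero_iff]
          constructor
          · rintro ⟨⟨-, h⟩, hpos⟩; exact ⟨h, by omega⟩
          · rintro ⟨h, hpos⟩; exact ⟨⟨by omega, h⟩, by omega⟩
    _ = q ! * (m - q)! := by
        rw [card_isSplitAtMax_and_symm_last_eq, Nat.sub_sub_self hq.le, mul_comm]
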